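/- If G is a bipartite graph and S ⊆ V(G), then 𝓔(G_S) ≥ 𝓔(G), i.e., attaching loops at any vertex subset of a bipartite graph does not decrease the graph energy. -/

import Mathlib

/-!
For a real symmetric `M`, every `X` with `-1 ≤ X ≤ 1` in the Loewner order satisfies
`tr (X M) ≤ ∑ |λᵢ(M)|` (diagonalise `M`: the diagonal entries of the conjugated `X` lie
in `[-1, 1]`), and `X = sign A` attains `tr (X A) = ∑ |λᵢ(A)|`. Let `J` be the `±1` diagonal
matrix of a 2-colouring of `G`, so that `J A J = -A`, while `J` commutes with the diagonal
matrix `loopMat n S - σ I`. For `M = A + loopMat n S - σ I` both `X = sign A` and `-J X J` are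
admissible, and `tr (X M) + tr (-J X J M) = tr (X (M - J M J)) = 2 tr (X A)`.
-/

open Matrix Finset

def loopMat (n : ℕ) (S : Finset (Fin n)) : Matrix (Fin n) (Fin n) ℝ :=
  Matrix.of fun i j => if i = j ∧ i ∈ S then 1 else 0

open scoped MatrixOrder

lemma star_mul_mul_mem_Icc_neg_one_one {R : Type*} [Ring R] [PartialOrder R] [StarRing R]
    [StarOrderedRing R] {u x : R} (hu : star u * u = 1) (hx : x ∈ Set.Icc (-1) 1) :
    star u * x * u ∈ Set.Icc (-1) 1 := by
  have h₁ := star_left_conjugate_le_conjugate hx.1 u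
  have h₂ := star_left_conjugate_le_conjugate hx.2 u
  rw [mul_neg_one, neg_mul, hu] at h₁
  rw [mul_one, hu] at h₂
  exact ⟨h₁, h₂⟩

namespace Matrix

variable {n : Type*} [DecidableEq n]

lemma abs_apply_self_le_one {X : Matrix n n ℝ} (hX : X ∈ Set.Icc (-1) 1) (i : n) :
    |X i i| ≤ 1 := by
  have h₁ := (le_iff.mp hX.1).diag_nonneg (i := i)
  have h₂ := (le_iff.mp hX.2).diag_nonneg (i := i)
  simp only [sub_apply, neg_apply, one_apply_eq] at h₁ h₂
  exact abs_le.mpr ⟨by linarith, by linarith⟩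

lemma diagonal_mem_Icc_neg_one_one {d : n → ℝ} (hd : ∀ i, |d i| ≤ 1) :
    diagonal d ∈ Set.Icc (-1) 1 := by
  refine ⟨le_iff.mpr ?_, le_iff.mpr ?_⟩
  · rw [sub_neg_eq_add, ← diagonal_one, diagonal_add]
    exact PosSemidef.diagonal fun i => show 0 ≤ d i + 1 by linarith [(abs_le.mp (hd i)).1]
  · rw [← diagonal_one, diagonal_sub]
    exact PosSemidef.diagonal fun i => show 0 ≤ 1 - d i by linarith [(abs_le.mp (hd i)).2]

variable [Fintype n]

lemma trace_mul_diagonal_le_sum_abs {X : Matrix n n ℝ} (hX : X ∈ Set.Icc (-1) 1)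
    (d : n → ℝ) :
    (X * diagonal d).trace ≤ ∑ i, |d i| := by
  simp only [trace, diag_apply, mul_diagonal]
  refine Finset.sum_le_sum fun i _ => ?_
  calc X i i * d i ≤ |X i i| * |d i| := abs_mul (X i i) (d i) ▸ le_abs_self _
    _ ≤ |d i| := mul_le_of_le_one_left (abs_nonneg _) (abs_apply_self_le_one hX i)

lemma trace_mul_conj_diagonal_le_sum_abs {X U : Matrix n n ℝ} (hU : star U * U = 1)
    (hX : X ∈ Set.Icc (-1) 1) (d : n → ℝ) :
    (X * (U * diagonal d * star U)).trace ≤ ∑ i, |d i| := by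
  rw [← mul_assoc, trace_mul_cycle, ← mul_assoc]
  have hUXU := star_mul_mul_mem_Icc_neg_one_one hU hX
  exact trace_mul_diagonal_le_sum_abs hUXU d

lemma trace_conj_diagonal_mul_conj_diagonal {U : Matrix n n ℝ} (hU : star U * U = 1)
    (d e : n → ℝ) :
    (U * diagonal d * star U * (U * diagonal e * star U)).trace = ∑ i, d i * e i := by
  rw [show U * diagonal d * star U * (U * diagonal e * star U)
      = U * (diagonal d * (star U * U) * diagonal e) * star U by simp only [mul_assoc],
    hU, mul_one, diagonal_mul_diagonal, trace_mul_cycle, hU, one_mul, trace_diagonal]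

namespace IsHermitian

variable {A : Matrix n n ℝ}

lemma eq_mul_diagonal_mul_star (hA : A.IsHermitian) :
    A = (hA.eigenvectorUnitary : Matrix n n ℝ) * diagonal hA.eigenvalues *
      star (hA.eigenvectorUnitary : Matrix n n ℝ) := by
  simpa using hA.spectral_theorem

lemma sub_smul_one_eq_mul_diagonal_mul_star (hA : A.IsHermitian) (c : ℝ) :
    A - c • 1 = (hA.eigenvectorUnitary : Matrix n n ℝ) *
      diagonal (fun i => hA.eigenvalues i - c) * star (hA.eigenvectorUnitary : Matrix n n ℝ) := by
  have hU := Unitary.mul_star_self_of_mem hA.eigenvectorUnitary.2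
  conv_lhs => rw [hA.eq_mul_diagonal_mul_star]
  rw [← diagonal_sub hA.eigenvalues fun _ => c, ← smul_one_eq_diagonal, mul_sub, sub_mul,
    Matrix.mul_smul, mul_one, Matrix.smul_mul, hU]

theorem trace_mul_sub_smul_one_le {X : Matrix n n ℝ} (hA : A.IsHermitian) (c : ℝ)
    (hX : X ∈ Set.Icc (-1) 1) :
    (X * (A - c • 1)).trace ≤ ∑ i, |hA.eigenvalues i - c| := by
  rw [hA.sub_smul_one_eq_mul_diagonal_mul_star c]
  exact trace_mul_conj_diagonal_le_sum_abs
    (Unitary.star_mul_self_of_mem hA.eigenvectorUnitary.2) hX _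

theorem exists_mem_Icc_trace_mul_eq_sum_abs (hA : A.IsHermitian) :
    ∃ X ∈ Set.Icc (-1 : Matrix n n ℝ) 1, (X * A).trace = ∑ i, |hA.eigenvalues i| := by
  set U : Matrix n n ℝ := ↑hA.eigenvectorUnitary
  set s : n → ℝ := fun i => SignType.sign (hA.eigenvalues i)
  refine ⟨U * diagonal s * star U, ?_, ?_⟩
  · have hU : star (star U) * star U = 1 := by simp [U]
    have hs : ∀ i, |s i| ≤ 1 := fun i => by
      simp only [s]
      cases SignType.sign (hA.eigenvalues i) <;> simp
    simpa using star_mul_mul_mem_Icc_neg_one_one hU (diagonal_mem_Icc_neg_one_one hs)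
  · conv_lhs => arg 1; arg 2; rw [hA.eq_mul_diagonal_mul_star]
    rw [trace_conj_diagonal_mul_conj_diagonal
      (Unitary.star_mul_self_of_mem hA.eigenvectorUnitary.2)]
    exact Finset.sum_congr rfl fun i _ => sign_mul_self _

theorem sum_abs_eigenvalues_le_of_involution {B J : Matrix n n ℝ} (hA : A.IsHermitian)
    (hB : B.IsHermitian) (c : ℝ) (hJ : J.IsHermitian) (hJJ : J * J = 1) (hJA : J * A * J = -A)
    (hJB : J * (B - A) * J = B - A) :
    ∑ i, |hA.eigenvalues i| ≤ ∑ i, |hB.eigenvalues i - c| := by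
  obtain ⟨X, hX, hXA⟩ := hA.exists_mem_Icc_trace_mul_eq_sum_abs
  have hJX : J * X * J ∈ Set.Icc (-1 : Matrix n n ℝ) 1 := by
    have hJ' : star J = J := hJ.eq
    simpa [hJ'] using star_mul_mul_mem_Icc_neg_one_one (u := J) (by rw [hJ', hJJ]) hX
  have hconj : J * (B - c • 1) * J = B - c • 1 - A - A := by
    rw [show B - c • 1 = A + (B - A) - c • 1 by abel, mul_sub, mul_add, sub_mul, add_mul, hJA,
      hJB, Matrix.mul_smul, mul_one, Matrix.smul_mul, hJJ]
    abel
  have hcycle : (J * X * J * (B - c • 1)).trace = (X * (J * (B - c • 1) * J)).trace := by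
    rw [mul_assoc, mul_assoc, trace_mul_comm, mul_assoc]
  have h₁ := hB.trace_mul_sub_smul_one_le c hX
  have h₂ := hB.trace_mul_sub_smul_one_le c ⟨neg_le_neg hJX.2, neg_le.mpr hJX.1⟩
  rw [neg_mul, trace_neg, hcycle, hconj, mul_sub, mul_sub, trace_sub, trace_sub] at h₂
  linarith

end IsHermitian

end Matrix

namespace SimpleGraph

variable {V : Type*} {G : SimpleGraph V}

theorem Colorable.exists_bipartition_signs {R : Type*} [Ring R] (hG : G.Colorable 2) :
    ∃ ε : V → R, (∀ i, ε i * ε i = 1) ∧ ∀ i j, G.Adj i j → ε i * ε j = -1 := by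
  obtain ⟨C⟩ := hG
  let s : Fin 2 → R := ![1, -1]
  have hss : ∀ a, s a * s a = 1 := by simp [s, Fin.forall_fin_two]
  have hsne : ∀ a b, a ≠ b → s a * s b = -1 := by simp [s, Fin.forall_fin_two]
  exact ⟨s ∘ C, fun i => hss (C i), fun i j hij => hsne _ _ (C.valid hij)⟩

theorem diagonal_mul_adjMatrix_mul_diagonal [DecidableRel G.Adj] [Fintype V] [DecidableEq V]
    {R : Type*} [Ring R] {ε : V → R} (hε : ∀ i j, G.Adj i j → ε i * ε j = -1) :
    diagonal ε * G.adjMatrix R * diagonal ε = -G.adjMatrix R := by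
  ext i j
  by_cases h : G.Adj i j
  · rw [mul_diagonal, diagonal_mul, Matrix.neg_apply, adjMatrix_apply, if_pos h, mul_one,
      hε i j h]
  · rw [mul_diagonal, diagonal_mul, Matrix.neg_apply, adjMatrix_apply, if_neg h, mul_zero,
      zero_mul, neg_zero]

end SimpleGraph

lemma loopMat_eq_diagonal (n : ℕ) (S : Finset (Fin n)) :
    loopMat n S = diagonal fun i => if i ∈ S then 1 else 0 := by
  ext i j
  simp only [loopMat, of_apply, diagonal_apply]
  split_ifs <;> simp_all

/-- for a bipartite graph `G` and any `S ⊆ V(G)`, attaching loops does not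
decrease the energy: `𝓔(G_S) ≥ 𝓔(G)`. -/
theorem bipartite_selfLoop_energy_ge (n : ℕ) (G : SimpleGraph (Fin n))
    [DecidableRel G.Adj] (hbip : G.Colorable 2) (S : Finset (Fin n))
    (hA : (G.adjMatrix ℝ).IsHermitian)
    (hB : (G.adjMatrix ℝ + loopMat n S).IsHermitian) :
    (∑ i, |hA.eigenvalues i|) ≤ ∑ i, |hB.eigenvalues i - (S.card : ℝ) / n| := by
  obtain ⟨ε, hεε, hεadj⟩ := hbip.exists_bipartition_signs (R := ℝ)
  have hJJ : diagonal ε * diagonal ε = 1 := by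
    rw [diagonal_mul_diagonal, ← diagonal_one]
    exact congrArg diagonal (funext hεε)
  refine hA.sum_abs_eigenvalues_le_of_involution hB _ (isHermitian_diagonal ε) hJJ
    (G.diagonal_mul_adjMatrix_mul_diagonal hεadj) ?_
  rw [add_sub_cancel_left, loopMat_eq_diagonal, diagonal_mul_diagonal, diagonal_mul_diagonal]
  exact congrArg diagonal (funext fun i => by rw [mul_right_comm, hεε, one_mul])
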